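/- arXiv:2603.28543 — 3 statements merged into one kernel-verified Lean document; each statement's English description precedes it below -/
import Mathlib

section
/- For every complex number z, the infinite product z · ∏_{n=1}^∞ (1 + z/(π n)) (1 − z/(π n)), with factors ordered by increasing n, converges to sin z. -/
open Filter Real

theorem stmt_2 (z : ℂ) :
    Filter.Tendsto
      (fun N : ℕ => z * ∏ n ∈ Finset.range N,
        ((1 + z / (π * (n + 1))) * (1 - z / (π * (n + 1)))))
      Filter.atTop (nhds (Complex.sin z)) := by
  have hπ : (π : ℂ) ≠ 0 := Complex.ofReal_ne_zero.mpr pi_ne_zero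
  have h := Complex.tendsto_euler_sin_prod (z / π)
  rw [mul_div_cancel₀ z hπ] at h
  refine h.congr fun N => ?_
  congr 1
  refine Finset.prod_congr rfl fun n _ => ?_
  rw [div_mul_eq_div_div, ← div_pow]
  ring
end

section
/- For all complex x, y such that x, y, and x+y are not nonpositive integers, the beta function satisfies B(x,y) = ((x+y)/(xy)) · ∏_{n=1}^∞ [ (1 + (x+y)/n) / ((1 + x/n)(1 + y/n)) ], where the product converges. -/
/-!
Gauss's limit `Γ(z) = lim N^z N! / (z (z+1) ⋯ (z+N))` (`Complex.GammaSeq`) can be written as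
`Γ(z) = lim N^z / (z ∏_{n<N} (1 + z/(n+1)))`. In the quotient `Γ(x)Γ(y)/Γ(x+y)` the factors
`N^x N^y / N^(x+y)` cancel exactly (the analogue of the cancelling `e^{z/n}` in the Weierstrass
product), so the `N`-th Gauss quotient *is* the `N`-th partial product, and the limit of quotients
is the quotient of limits because `Γ(x+y) ≠ 0`.
-/

/-- The Euler beta function `B(x,y) = Γ(x)Γ(y)/Γ(x+y)`. -/
noncomputable def betaFn (x y : ℂ) : ℂ :=
  Complex.Gamma x * Complex.Gamma y / Complex.Gamma (x + y)

namespace Complex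

open Finset Nat

theorem prod_range_one_add_div_succ (z : ℂ) (N : ℕ) :
    ∏ n ∈ range N, (1 + z / (n + 1)) = (∏ n ∈ range N, (z + (n + 1))) / N ! := by
  rw [← prod_range_add_one_eq_factorial, Nat.cast_prod, ← prod_div_distrib]
  refine prod_congr rfl fun n _ => ?_
  have hn : (n : ℂ) + 1 ≠ 0 := by exact_mod_cast n.succ_ne_zero
  push_cast
  field_simp
  ring

theorem GammaSeq_eq_cpow_div_mul_prod (z : ℂ) (N : ℕ) :
    GammaSeq z N = (N : ℂ) ^ z / (z * ∏ n ∈ range N, (1 + z / (n + 1))) := by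
  rw [GammaSeq, prod_range_succ', prod_range_one_add_div_succ, ← mul_div_assoc, div_div_eq_mul_div]
  push_cast
  simp only [add_zero, mul_comm z]

theorem GammaSeq_mul_GammaSeq_div_GammaSeq (x y : ℂ) {N : ℕ} (hN : N ≠ 0) :
    GammaSeq x N * GammaSeq y N / GammaSeq (x + y) N =
      (x + y) / (x * y) * ∏ n ∈ range N,
        (1 + (x + y) / (n + 1)) / ((1 + x / (n + 1)) * (1 + y / (n + 1))) := by
  have hN' : (N : ℂ) ≠ 0 := Nat.cast_ne_zero.mpr hN
  have hpow : (N : ℂ) ^ x * (N : ℂ) ^ y ≠ 0 :=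
    mul_ne_zero (cpow_ne_zero_iff.mpr (.inl hN')) (cpow_ne_zero_iff.mpr (.inl hN'))
  simp only [GammaSeq_eq_cpow_div_mul_prod, cpow_add _ _ hN', prod_div_distrib, prod_mul_distrib]
  rw [div_mul_div_comm ((N : ℂ) ^ x), div_div_div_eq, mul_comm ((N : ℂ) ^ x * _),
    mul_div_mul_right _ _ hpow]
  ring

end Complex

theorem stmt_7_general (x y : ℂ)
    (hxy : ∀ n : ℕ, x + y ≠ -n) :
    Filter.Tendsto
      (fun N : ℕ => (x + y) / (x * y) * ∏ n ∈ Finset.range N,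
        (1 + (x + y) / (n + 1)) / ((1 + x / (n + 1)) * (1 + y / (n + 1))))
      Filter.atTop (nhds (betaFn x y)) := by
  refine (((Complex.GammaSeq_tendsto_Gamma x).mul (Complex.GammaSeq_tendsto_Gamma y)).div
      (Complex.GammaSeq_tendsto_Gamma (x + y)) (Complex.Gamma_ne_zero hxy)).congr' ?_
  filter_upwards [Filter.eventually_ne_atTop 0] with N hN
  exact Complex.GammaSeq_mul_GammaSeq_div_GammaSeq x y hN

theorem stmt_7 (x y : ℂ)
    (hx : ∀ n : ℕ, x ≠ -n) (hy : ∀ n : ℕ, y ≠ -n) (hxy : ∀ n : ℕ, x + y ≠ -n) :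
    Filter.Tendsto
      (fun N : ℕ => (x + y) / (x * y) * ∏ n ∈ Finset.range N,
        (1 + (x + y) / (n + 1)) / ((1 + x / (n + 1)) * (1 + y / (n + 1))))
      Filter.atTop (nhds (betaFn x y)) :=
  stmt_7_general x y hxy
end

section
/- For all complex x, y such that x, y, and 1−x−y are not nonpositive integers, the function Γ(x)Γ(y)Γ(1−x−y)/(Γ(x+y)Γ(1−x)Γ(1−y)) equals ((x+y)(1−x)(1−y))/(xy(1−x−y)) · ∏_{n=1}^∞ [ (1+(x+y)/n)(1−x/(n+1))(1−y/(n+1)) ] / [ (1+x/n)(1+y/n)(1−(x+y)/(n+1)) ]. -/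
/-!
With `r(j) = (x+y+j)(1-x+j)(1-y+j) / ((x+j)(y+j)(1-x-y+j))`, the prefactor is `r(0)` and the
`n`-th factor is `(n+1)/(n+2) · r(n+1)`, so the `N`-th partial product telescopes to
`(∏_{j ≤ N} r(j)) / (N+1)`. Euler's sequence `GammaSeq s N = N^s N! / ∏_{j ≤ N} (s+j)` expresses
the same product as `N` times the ratio of the six `GammaSeq`s (the powers of `N` combine to `N⁻¹`),
and `GammaSeq s N → Γ(s)` gives the limit.
-/
open Complex Filter Topology Finset
open scoped Nat

theorem Filter.Tendsto.div_of_eventually_eq_zero {α K : Type*} [Field K] [TopologicalSpace K]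
    [ContinuousMul K] [ContinuousInv₀ K] {l : Filter α} {f g : α → K} {a b : K}
    (hf : Tendsto f l (𝓝 a)) (hg : Tendsto g l (𝓝 b)) (hb : b = 0 → ∀ᶠ t in l, g t = 0) :
    Tendsto (fun t => f t / g t) l (𝓝 (a / b)) := by
  rcases eq_or_ne b 0 with rfl | hb0
  · rw [div_zero]
    exact tendsto_const_nhds.congr' <| (hb rfl).mono fun t ht => by simp [ht]
  · exact hf.div hg hb0

theorem Complex.GammaSeq_eventually_eq_zero {s : ℂ} (hs : Gamma s = 0) :
    ∀ᶠ n in atTop, GammaSeq s n = 0 := by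
  obtain ⟨m, rfl⟩ := (Gamma_eq_zero_iff s).mp hs
  filter_upwards [eventually_ge_atTop m] with n hn
  rw [GammaSeq, prod_eq_zero (mem_range.mpr (Nat.lt_succ_of_le hn)) (neg_add_cancel _), div_zero]

theorem Complex.GammaSeq_div_GammaSeq (a b : ℂ) {n : ℕ} (hn : n ≠ 0) :
    GammaSeq a n / GammaSeq b n = (n : ℂ) ^ (a - b) * ∏ j ∈ range (n + 1), (b + j) / (a + j) := by
  have hn' : (n : ℂ) ≠ 0 := Nat.cast_ne_zero.mpr hn
  have hfac : (n ! : ℂ) ≠ 0 := Nat.cast_ne_zero.mpr n.factorial_ne_zero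
  rw [GammaSeq, GammaSeq, cpow_sub _ _ hn', prod_div_distrib, div_div_div_eq]
  field_simp

namespace VirasoroShapiro

noncomputable def shiftRatio (x y : ℂ) (j : ℕ) : ℂ :=
  (x + y + j) / (x + j) * ((1 - x + j) / (y + j)) * ((1 - y + j) / (1 - x - y + j))

theorem gammaSeq_ratio_eq (x y : ℂ) {n : ℕ} (hn : n ≠ 0) :
    GammaSeq x n * GammaSeq y n * GammaSeq (1 - x - y) n /
        (GammaSeq (x + y) n * GammaSeq (1 - x) n * GammaSeq (1 - y) n) =
      (∏ j ∈ range (n + 1), shiftRatio x y j) / n := by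
  have hn' : (n : ℂ) ≠ 0 := Nat.cast_ne_zero.mpr hn
  have hexp : (n : ℂ) ^ (x - (x + y)) * (n : ℂ) ^ (y - (1 - x)) * (n : ℂ) ^ (1 - x - y - (1 - y)) =
      (n : ℂ)⁻¹ := by
    rw [← cpow_add _ _ hn', ← cpow_add _ _ hn', ← cpow_neg_one]
    ring_nf
  rw [mul_div_mul_comm, mul_div_mul_comm, GammaSeq_div_GammaSeq _ _ hn,
    GammaSeq_div_GammaSeq _ _ hn, GammaSeq_div_GammaSeq _ _ hn]
  simp only [shiftRatio, prod_mul_distrib]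
  rw [div_eq_mul_inv, ← hexp]
  ring

theorem product_factor_eq (x y : ℂ) (n : ℕ) :
    (1 + (x + y) / (n + 1)) * (1 - x / (n + 2)) * (1 - y / (n + 2)) /
        ((1 + x / (n + 1)) * (1 + y / (n + 1)) * (1 - (x + y) / (n + 2))) =
      (n + 1) / (n + 2) * shiftRatio x y (n + 1) := by
  have h1 : (n + 1 : ℂ) ≠ 0 := by exact_mod_cast n.succ_ne_zero
  have h2 : (n + 2 : ℂ) ≠ 0 := by exact_mod_cast (n + 1).succ_ne_zero
  simp only [shiftRatio]
  push_cast
  field_simp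
  ring

theorem partial_product_eq (x y : ℂ) (N : ℕ) :
    (x + y) * (1 - x) * (1 - y) / (x * y * (1 - x - y)) *
        ∏ n ∈ range N,
          (1 + (x + y) / (n + 1)) * (1 - x / (n + 2)) * (1 - y / (n + 2)) /
            ((1 + x / (n + 1)) * (1 + y / (n + 1)) * (1 - (x + y) / (n + 2))) =
      (∏ j ∈ range (N + 1), shiftRatio x y j) / (N + 1) := by
  induction N with
  | zero =>
    simp only [range_zero, prod_empty, mul_one, zero_add, range_one, prod_singleton, shiftRatio,
      Nat.cast_zero, add_zero, div_one]
    rw [mul_div_mul_comm, mul_div_mul_comm]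
  | succ N ih =>
    have h1 : (N + 1 : ℂ) ≠ 0 := by exact_mod_cast N.succ_ne_zero
    rw [prod_range_succ, ← mul_assoc, ih, product_factor_eq, prod_range_succ _ (N + 1)]
    push_cast
    field_simp
    ring

end VirasoroShapiro

theorem stmt_9_general (x y : ℂ) :
    Filter.Tendsto
      (fun N : ℕ =>
        (x + y) * (1 - x) * (1 - y) / (x * y * (1 - x - y)) *
          ∏ n ∈ Finset.range N,
            (1 + (x + y) / (n + 1)) * (1 - x / (n + 2)) * (1 - y / (n + 2)) /
              ((1 + x / (n + 1)) * (1 + y / (n + 1)) * (1 - (x + y) / (n + 2))))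
      Filter.atTop
      (nhds (Gamma x * Gamma y * Gamma (1 - x - y) /
        (Gamma (x + y) * Gamma (1 - x) * Gamma (1 - y)))) := by
  -- At a pole of the denominator the right-hand side is the junk value `_ / 0 = 0`.
  have hden : Gamma (x + y) * Gamma (1 - x) * Gamma (1 - y) = 0 →
      ∀ᶠ N in atTop, GammaSeq (x + y) N * GammaSeq (1 - x) N * GammaSeq (1 - y) N = 0 := by
    simp only [mul_eq_zero]
    rintro ((h | h) | h) <;>
      filter_upwards [GammaSeq_eventually_eq_zero h] with N hN <;> simp [hN]
  have hGammaSeq := (((GammaSeq_tendsto_Gamma x).mul (GammaSeq_tendsto_Gamma y)).mul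
    (GammaSeq_tendsto_Gamma (1 - x - y))).div_of_eventually_eq_zero
    (((GammaSeq_tendsto_Gamma (x + y)).mul (GammaSeq_tendsto_Gamma (1 - x))).mul
      (GammaSeq_tendsto_Gamma (1 - y))) hden
  have hlim := (tendsto_natCast_div_add_atTop (1 : ℂ)).mul hGammaSeq
  rw [one_mul] at hlim
  refine hlim.congr' ((eventually_ne_atTop 0).mono fun N hN => ?_)
  have hN' : (N : ℂ) ≠ 0 := Nat.cast_ne_zero.mpr hN
  dsimp only
  rw [VirasoroShapiro.partial_product_eq, VirasoroShapiro.gammaSeq_ratio_eq x y hN]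
  field_simp

theorem stmt_9 (x y : ℂ)
    (hx : ∀ n : ℕ, x ≠ -n) (hy : ∀ n : ℕ, y ≠ -n) (hz : ∀ n : ℕ, 1 - x - y ≠ -n) :
    Filter.Tendsto
      (fun N : ℕ =>
        (x + y) * (1 - x) * (1 - y) / (x * y * (1 - x - y)) *
          ∏ n ∈ Finset.range N,
            (1 + (x + y) / (n + 1)) * (1 - x / (n + 2)) * (1 - y / (n + 2)) /
              ((1 + x / (n + 1)) * (1 + y / (n + 1)) * (1 - (x + y) / (n + 2))))
      Filter.atTop
      (nhds (Gamma x * Gamma y * Gamma (1 - x - y) /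
        (Gamma (x + y) * Gamma (1 - x) * Gamma (1 - y)))) :=
  stmt_9_general x y
end
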